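/- ∏_{n≥0} [((n+1)(4n+5)) / ((n+2)(4n+1))]^{t_n} = √2, and ∏_{n≥0} [((8n+1)(8n+7)) / ((8n+3)(8n+5))]^{t_n} = √(2√2 − 2). -/

import Mathlib

/-!
Write `ε n = (-1) ^ t_n`, so that `x ^ t_n = √(x / x ^ ε n)`: each product is the square root of
the plain product divided by the signed product `∏ x_n ^ ε n`. The plain products are ratios of
Gamma values by Euler's limit formula (`4`, and `√2 - 1` by the reflection formula).

For the signed products put `f(a) = ∏ ((n + a) / (n + 1)) ^ ε n`. Grouping the factors `2m` and
`2m + 1`, which carry the signs `ε m` and `-ε m`, gives `f(a) = f(a/2) / f((a+1)/2) / f(1/2)`, and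
the same grouping of `∏ (n / (n + 1)) ^ ε n` gives the Woods–Robbins value `f(1/2)² = 1/2`. These
relations at `a = 1/2, 2, 3/2, 1/4, 3/4` evaluate the two signed products as `2` and `1/2`.
-/

open Filter Finset Topology

/-- The Thue–Morse sequence: sum modulo 2 of the binary digits of `n`. -/
def tm (n : ℕ) : ℕ := (Nat.digits 2 n).sum % 2

open Real

lemma tm_lt_two (n : ℕ) : tm n < 2 := Nat.mod_lt _ two_pos

lemma tm_two_mul (n : ℕ) : tm (2 * n) = tm n := by
  rcases Nat.eq_zero_or_pos n with rfl | hn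
  · rfl
  · rw [tm, Nat.digits_def' one_lt_two (by omega)]
    simp [tm]

lemma tm_two_mul_add_one (n : ℕ) : tm (2 * n + 1) = 1 - tm n := by
  rw [tm, Nat.digits_def' one_lt_two (by omega), List.sum_cons,
    show (2 * n + 1) / 2 = n by omega, show (2 * n + 1) % 2 = 1 by omega]
  have := tm_lt_two n
  unfold tm at this ⊢
  omega

def tmSign (n : ℕ) : ℤ := (-1) ^ tm n

lemma tmSign_zero : tmSign 0 = 1 := rfl

lemma tmSign_two_mul (n : ℕ) : tmSign (2 * n) = tmSign n := by
  rw [tmSign, tmSign, tm_two_mul]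

lemma tmSign_two_mul_add_one (n : ℕ) : tmSign (2 * n + 1) = -tmSign n := by
  have := tm_lt_two n
  rw [tmSign, tmSign, tm_two_mul_add_one]
  interval_cases tm n <;> rfl

lemma abs_tmSign (n : ℕ) : |(tmSign n : ℝ)| = 1 := by
  simp [tmSign]

lemma zpow_tmSign_mul_sq_pow_tm {x : ℝ} (hx : x ≠ 0) (n : ℕ) :
    x ^ tmSign n * (x ^ tm n) ^ 2 = x := by
  have := tm_lt_two n
  rw [tmSign]
  interval_cases tm n
  · simp
  · simp [sq, hx]

noncomputable def tmSignProd (g : ℕ → ℝ) (N : ℕ) : ℝ := ∏ n ∈ range N, g n ^ tmSign n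

lemma tmSignProd_mul (g h : ℕ → ℝ) (N : ℕ) :
    tmSignProd (fun n => g n * h n) N = tmSignProd g N * tmSignProd h N := by
  simp only [tmSignProd, mul_zpow, prod_mul_distrib]

lemma tmSignProd_div (g h : ℕ → ℝ) (N : ℕ) :
    tmSignProd (fun n => g n / h n) N = tmSignProd g N / tmSignProd h N := by
  simp only [tmSignProd, div_zpow, prod_div_distrib]

lemma tmSignProd_two_mul (g : ℕ → ℝ) (N : ℕ) :
    tmSignProd g (2 * N) = tmSignProd (fun m => g (2 * m) / g (2 * m + 1)) N := by
  induction N with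
  | zero => rfl
  | succ N ih =>
    rw [tmSignProd, show 2 * (N + 1) = 2 * N + 1 + 1 by ring, prod_range_succ, prod_range_succ,
      ← tmSignProd, ih, tmSignProd, tmSignProd, prod_range_succ, tmSign_two_mul,
      tmSign_two_mul_add_one, zpow_neg, div_zpow, div_eq_mul_inv, mul_assoc]

lemma tmSignProd_eq_exp {g : ℕ → ℝ} (hg : ∀ n, 0 < g n) (N : ℕ) :
    tmSignProd g N = exp (∑ n ∈ range N, tmSign n * log (g n)) := by
  rw [exp_sum, tmSignProd]
  refine prod_congr rfl fun n _ => ?_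
  rw [← rpow_intCast, rpow_def_of_pos (hg n), mul_comm]

lemma tendsto_zpow_tmSign {g : ℕ → ℝ} (hg : ∀ n, 0 < g n) (h1 : Tendsto g atTop (𝓝 1)) :
    Tendsto (fun n => g n ^ tmSign n) atTop (𝓝 1) := by
  have hlog : Tendsto (fun n => log (g n)) atTop (𝓝 0) := by
    simpa using h1.log one_ne_zero
  have hexp : Tendsto (fun n => tmSign n * log (g n)) atTop (𝓝 0) :=
    squeeze_zero_norm (fun n => by rw [norm_mul, Real.norm_eq_abs, abs_tmSign, one_mul])
      (by simpa using hlog.norm)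
  convert (continuous_exp.tendsto 0).comp hexp using 1
  · funext n
    simp only [Function.comp, ← rpow_intCast, rpow_def_of_pos (hg n), mul_comm]
  · simp

lemma tendsto_of_tendsto_two_mul_of_tendsto_two_mul_add_one {α : Type*} {u : ℕ → α}
    {l : Filter α} (he : Tendsto (fun n => u (2 * n)) atTop l)
    (ho : Tendsto (fun n => u (2 * n + 1)) atTop l) : Tendsto u atTop l := fun _ hs =>
  Eventually.atTop_of_arithmetic two_ne_zero fun k hk => by
    interval_cases k
    exacts [he hs, ho hs]

lemma summable_of_abs_le_div_sq {f : ℕ → ℝ} {C : ℝ} (h : ∀ m, |f m| ≤ C / ((m : ℝ) + 1) ^ 2) :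
    Summable f := by
  have hsq : Summable fun m : ℕ => 1 / ((m : ℝ) + 1) ^ 2 := by
    simpa using (summable_nat_add_iff 1).mpr (Real.summable_one_div_nat_pow.mpr one_lt_two)
  exact (hsq.mul_left C).of_norm_bounded fun m => by simpa [div_eq_mul_inv] using h m

/-- Grouped in pairs, the factors `g (2m) ^ tmSign m * g (2m+1) ^ (-tmSign m)` form an
absolutely convergent product. -/
theorem exists_tendsto_tmSignProd {g : ℕ → ℝ} (hg : ∀ n, 0 < g n) (h1 : Tendsto g atTop (𝓝 1))
    (hpair : Summable fun m => g (2 * m) / g (2 * m + 1) - 1) :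
    ∃ L, 0 < L ∧ Tendsto (tmSignProd g) atTop (𝓝 L) := by
  have hu : ∀ m, 0 < g (2 * m) / g (2 * m + 1) := fun m => div_pos (hg _) (hg _)
  have hlog : Summable fun m => tmSign m * log (g (2 * m) / g (2 * m + 1)) := by
    have := (Real.summable_log_one_add_of_summable hpair).abs
    simp only [add_sub_cancel] at this
    exact this.of_norm_bounded fun m => by
      rw [norm_mul, Real.norm_eq_abs, Real.norm_eq_abs, abs_tmSign, one_mul]
  refine ⟨exp (∑' m, tmSign m * log (g (2 * m) / g (2 * m + 1))), exp_pos _, ?_⟩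
  have heven : Tendsto (fun N => tmSignProd g (2 * N)) atTop
      (𝓝 (exp (∑' m, tmSign m * log (g (2 * m) / g (2 * m + 1))))) := by
    simp_rw [tmSignProd_two_mul, tmSignProd_eq_exp hu]
    exact (continuous_exp.tendsto _).comp hlog.hasSum.tendsto_sum_nat
  refine tendsto_of_tendsto_two_mul_of_tendsto_two_mul_add_one heven ?_
  have hlast := tendsto_zpow_tmSign hg h1 |>.comp (tendsto_id.const_mul_atTop' two_pos)
  simpa [tmSignProd, prod_range_succ] using heven.mul hlast

noncomputable def shiftRatio (a : ℝ) (n : ℕ) : ℝ := (n + a) / (n + 1)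

lemma shiftRatio_pos {a : ℝ} (ha : 0 < a) (n : ℕ) : 0 < shiftRatio a n := by
  unfold shiftRatio; positivity

lemma tendsto_shiftRatio (a : ℝ) : Tendsto (shiftRatio a) atTop (𝓝 1) := by
  have := tendsto_add_mul_div_add_mul_atTop_nhds a 1 1 one_ne_zero
  simp only [one_mul, div_one] at this
  exact this.congr fun n => by rw [shiftRatio, add_comm a, add_comm 1]

lemma shiftRatio_pair {a : ℝ} (ha : 0 < a) (m : ℕ) :
    shiftRatio a (2 * m) / shiftRatio a (2 * m + 1)
      = shiftRatio (a / 2) m / shiftRatio ((a + 1) / 2) m / shiftRatio (1 / 2) m := by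
  unfold shiftRatio
  push_cast
  field_simp
  ring

lemma shiftRatio_pair_sub_one {a : ℝ} (ha : 0 < a) (m : ℕ) :
    shiftRatio a (2 * m) / shiftRatio a (2 * m + 1) - 1
      = (a - 1) / ((2 * m + 1) * (2 * m + 1 + a)) := by
  unfold shiftRatio
  push_cast
  field_simp
  ring

lemma exists_tendsto_tmSignProd_shiftRatio {a : ℝ} (ha : 0 < a) :
    ∃ L, 0 < L ∧ Tendsto (tmSignProd (shiftRatio a)) atTop (𝓝 L) := by
  refine exists_tendsto_tmSignProd (shiftRatio_pos ha) (tendsto_shiftRatio a)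
    (summable_of_abs_le_div_sq (C := |a - 1|) fun m => ?_)
  have hm : (0 : ℝ) ≤ m := m.cast_nonneg
  rw [shiftRatio_pair_sub_one ha, abs_div,
    abs_of_pos (by positivity : (0 : ℝ) < (2 * m + 1) * (2 * m + 1 + a))]
  gcongr
  nlinarith

/-- The infinite product `∏_{n ≥ 0} ((n + a) / (n + 1)) ^ (-1) ^ t_n`, meaningful for `0 < a`. -/
noncomputable def tmRatioProd (a : ℝ) : ℝ := limUnder atTop (tmSignProd (shiftRatio a))

lemma tendsto_tmRatioProd {a : ℝ} (ha : 0 < a) :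
    Tendsto (tmSignProd (shiftRatio a)) atTop (𝓝 (tmRatioProd a)) := by
  obtain ⟨L, -, hL⟩ := exists_tendsto_tmSignProd_shiftRatio ha
  rwa [tmRatioProd, hL.limUnder_eq]

lemma tmRatioProd_pos {a : ℝ} (ha : 0 < a) : 0 < tmRatioProd a := by
  obtain ⟨L, hL0, hL⟩ := exists_tendsto_tmSignProd_shiftRatio ha
  rwa [tmRatioProd, hL.limUnder_eq]

lemma tmRatioProd_one : tmRatioProd 1 = 1 := by
  have : tmSignProd (shiftRatio 1) = fun _ => 1 := by
    funext N
    exact prod_eq_one fun n _ => by rw [shiftRatio, div_self (by positivity), one_zpow]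
  rw [tmRatioProd, this, tendsto_const_nhds.limUnder_eq]

lemma tmRatioProd_eq_div {a : ℝ} (ha : 0 < a) :
    tmRatioProd a = tmRatioProd (a / 2) / tmRatioProd ((a + 1) / 2) / tmRatioProd (1 / 2) := by
  have hpair : ∀ N, tmSignProd (shiftRatio a) (2 * N) = tmSignProd (shiftRatio (a / 2)) N
      / tmSignProd (shiftRatio ((a + 1) / 2)) N / tmSignProd (shiftRatio (1 / 2)) N := fun N => by
    simp only [tmSignProd_two_mul, shiftRatio_pair ha, tmSignProd_div]
  refine tendsto_nhds_unique ((tendsto_tmRatioProd ha).comp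
    (tendsto_id.const_mul_atTop' two_pos)) ?_
  simp only [Function.comp_def, id, hpair]
  exact ((tendsto_tmRatioProd (by positivity)).div (tendsto_tmRatioProd (by positivity))
    (tmRatioProd_pos (by positivity)).ne').div (tendsto_tmRatioProd (by positivity))
    (tmRatioProd_pos (by positivity)).ne'

/-- `shiftRatio 0` with its vanishing factor at `n = 0` replaced by `1`: pairing its factors is
the boundary case `a = 0` of `tmRatioProd_eq_div`, which pins down `tmRatioProd (1 / 2)`. -/
noncomputable def woodsRobbinsFactor (n : ℕ) : ℝ := if n = 0 then 1 else n / (n + 1)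

lemma woodsRobbinsFactor_pos (n : ℕ) : 0 < woodsRobbinsFactor n := by
  unfold woodsRobbinsFactor
  split_ifs with hn
  · exact one_pos
  · have : (0 : ℝ) < n := by exact_mod_cast Nat.pos_of_ne_zero hn
    positivity

lemma tendsto_woodsRobbinsFactor : Tendsto woodsRobbinsFactor atTop (𝓝 1) :=
  (tendsto_shiftRatio 0).congr' <| (eventually_ne_atTop 0).mono fun n hn => by
    simp [woodsRobbinsFactor, shiftRatio, hn]

lemma woodsRobbinsFactor_pair (m : ℕ) :
    woodsRobbinsFactor (2 * m) / woodsRobbinsFactor (2 * m + 1) = (if m = 0 then 1 / 2 else 1)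
      * woodsRobbinsFactor m / (shiftRatio (1 / 2) m * shiftRatio (1 / 2) m) := by
  rcases eq_or_ne m 0 with rfl | hm
  · norm_num [woodsRobbinsFactor, shiftRatio]
  · have : (0 : ℝ) < m := by exact_mod_cast Nat.pos_of_ne_zero hm
    simp only [woodsRobbinsFactor, shiftRatio, hm, if_false, mul_eq_zero, OfNat.ofNat_ne_zero,
      false_or, Nat.add_one_ne_zero]
    push_cast
    field_simp
    ring

lemma abs_woodsRobbinsFactor_pair_sub_one_le (m : ℕ) :
    |woodsRobbinsFactor (2 * m) / woodsRobbinsFactor (2 * m + 1) - 1| ≤ 1 / ((m : ℝ) + 1) ^ 2 := by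
  rcases eq_or_ne m 0 with rfl | hm
  · norm_num [woodsRobbinsFactor]
  · have : (0 : ℝ) < m := by exact_mod_cast Nat.pos_of_ne_zero hm
    have hpair : woodsRobbinsFactor (2 * m) / woodsRobbinsFactor (2 * m + 1) - 1
        = -(1 / (2 * m + 1) ^ 2) := by
      simp only [woodsRobbinsFactor, hm, mul_eq_zero, OfNat.ofNat_ne_zero, false_or, if_false,
        Nat.add_one_ne_zero]
      push_cast
      field_simp
      ring
    rw [hpair, abs_neg, abs_of_pos (by positivity)]
    gcongr
    linarith

lemma tmSignProd_ite_zero {N : ℕ} (hN : N ≠ 0) (c : ℝ) :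
    tmSignProd (fun m => if m = 0 then c else 1) N = c := by
  rw [tmSignProd, prod_eq_single_of_mem 0 (mem_range.2 (Nat.pos_of_ne_zero hN))
    fun n _ hn => by simp [hn]]
  simp [tmSign_zero]

lemma tmRatioProd_half_sq : tmRatioProd (1 / 2) ^ 2 = 1 / 2 := by
  obtain ⟨R, hR0, hR⟩ := exists_tendsto_tmSignProd woodsRobbinsFactor_pos
    tendsto_woodsRobbinsFactor (summable_of_abs_le_div_sq abs_woodsRobbinsFactor_pair_sub_one_le)
  have hp0 := tmRatioProd_pos (by norm_num : (0 : ℝ) < 1 / 2)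
  have hp := tendsto_tmRatioProd (by norm_num : (0 : ℝ) < 1 / 2)
  have hpair : ∀ᶠ N in atTop, tmSignProd woodsRobbinsFactor (2 * N) = 1 / 2
      * tmSignProd woodsRobbinsFactor N / (tmSignProd (shiftRatio (1 / 2)) N
        * tmSignProd (shiftRatio (1 / 2)) N) :=
    (eventually_ne_atTop 0).mono fun N hN => by
      simp only [tmSignProd_two_mul, woodsRobbinsFactor_pair, tmSignProd_div, tmSignProd_mul,
        tmSignProd_ite_zero hN]
  have hlim : R = 1 / 2 * R / (tmRatioProd (1 / 2) * tmRatioProd (1 / 2)) :=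
    tendsto_nhds_unique (hR.comp (tendsto_id.const_mul_atTop' two_pos))
      (((tendsto_const_nhds.mul hR).div (hp.mul hp) (by positivity)).congr'
        (hpair.mono fun N h => h.symm))
  field_simp at hlim
  nlinarith

lemma tmRatioProd_quarter_div : tmRatioProd (1 / 4) / tmRatioProd (3 / 4) = 1 / 2 := by
  have h := tmRatioProd_eq_div (a := 1 / 2) (by norm_num)
  rw [show (1 / 2 : ℝ) / 2 = 1 / 4 by norm_num, show (1 / 2 + 1 : ℝ) / 2 = 3 / 4 by norm_num] at h
  have h12 := tmRatioProd_pos (by norm_num : (0 : ℝ) < 1 / 2)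
  calc tmRatioProd (1 / 4) / tmRatioProd (3 / 4) = tmRatioProd (1 / 2) ^ 2 := by
        rw [sq, eq_comm, ← eq_div_iff h12.ne']
        exact h
    _ = 1 / 2 := tmRatioProd_half_sq

lemma tmRatioProd_ratio_eq_two :
    tmRatioProd 1 * tmRatioProd (5 / 4) / (tmRatioProd 2 * tmRatioProd (1 / 4)) = 2 := by
  have h2 := tmRatioProd_eq_div (a := 2) (by norm_num)
  have h32 := tmRatioProd_eq_div (a := 3 / 2) (by norm_num)
  rw [show (2 : ℝ) / 2 = 1 by norm_num, show (2 + 1 : ℝ) / 2 = 3 / 2 by norm_num] at h2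
  rw [show (3 / 2 : ℝ) / 2 = 3 / 4 by norm_num, show (3 / 2 + 1 : ℝ) / 2 = 5 / 4 by norm_num] at h32
  have := tmRatioProd_pos (by norm_num : (0 : ℝ) < 1 / 2)
  have := tmRatioProd_pos (by norm_num : (0 : ℝ) < 1 / 4)
  have := tmRatioProd_pos (by norm_num : (0 : ℝ) < 3 / 4)
  have := tmRatioProd_pos (by norm_num : (0 : ℝ) < 5 / 4)
  have hq := tmRatioProd_quarter_div
  rw [h2, h32, tmRatioProd_one]
  field_simp at hq ⊢
  linarith

lemma tmRatioProd_ratio_eq_half :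
    tmRatioProd (1 / 8) * tmRatioProd (7 / 8) / (tmRatioProd (3 / 8) * tmRatioProd (5 / 8))
      = 1 / 2 := by
  have h14 := tmRatioProd_eq_div (a := 1 / 4) (by norm_num)
  have h34 := tmRatioProd_eq_div (a := 3 / 4) (by norm_num)
  rw [show (1 / 4 : ℝ) / 2 = 1 / 8 by norm_num, show (1 / 4 + 1 : ℝ) / 2 = 5 / 8 by norm_num] at h14
  rw [show (3 / 4 : ℝ) / 2 = 3 / 8 by norm_num, show (3 / 4 + 1 : ℝ) / 2 = 7 / 8 by norm_num] at h34
  have := tmRatioProd_pos (by norm_num : (0 : ℝ) < 1 / 2)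
  have := tmRatioProd_pos (by norm_num : (0 : ℝ) < 3 / 8)
  have := tmRatioProd_pos (by norm_num : (0 : ℝ) < 5 / 8)
  have := tmRatioProd_pos (by norm_num : (0 : ℝ) < 7 / 8)
  rw [← tmRatioProd_quarter_div, h14, h34]
  field_simp

lemma prod_range_succ_eq_GammaSeq {a b c d : ℝ} (ha : 0 < a) (hb : 0 < b) (hc : 0 < c)
    (hd : 0 < d) (h : a + b = c + d) {N : ℕ} (hN : N ≠ 0) :
    ∏ n ∈ range (N + 1), ((n + a) * (n + b)) / ((n + c) * (n + d))
      = GammaSeq c N * GammaSeq d N / (GammaSeq a N * GammaSeq b N) := by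
  have hN0 : (0 : ℝ) < N := by exact_mod_cast Nat.pos_of_ne_zero hN
  have hpow : (N : ℝ) ^ a * (N : ℝ) ^ b = (N : ℝ) ^ c * (N : ℝ) ^ d := by
    rw [← rpow_add hN0, ← rpow_add hN0, h]
  have hcomm : ∀ s : ℝ, ∏ j ∈ range (N + 1), (s + j) = ∏ j ∈ range (N + 1), ((j : ℝ) + s) :=
    fun s => prod_congr rfl fun _ _ => add_comm _ _
  have : (0 : ℝ) < N.factorial := by exact_mod_cast N.factorial_pos
  simp only [prod_div_distrib, prod_mul_distrib, GammaSeq, hcomm]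
  field_simp
  rw [hpow]

lemma tendsto_prod_quad {a b c d : ℝ} (ha : 0 < a) (hb : 0 < b) (hc : 0 < c) (hd : 0 < d)
    (h : a + b = c + d) :
    Tendsto (fun N => ∏ n ∈ range N, ((n + a) * (n + b)) / ((n + c) * (n + d))) atTop
      (𝓝 (Gamma c * Gamma d / (Gamma a * Gamma b))) := by
  refine (tendsto_add_atTop_iff_nat 1).mp <|
    (((GammaSeq_tendsto_Gamma c).mul (GammaSeq_tendsto_Gamma d)).div
      ((GammaSeq_tendsto_Gamma a).mul (GammaSeq_tendsto_Gamma b))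
      (mul_pos (Gamma_pos_of_pos ha) (Gamma_pos_of_pos hb)).ne').congr' ?_
  filter_upwards [eventually_ne_atTop 0] with N hN
  exact (prod_range_succ_eq_GammaSeq ha hb hc hd h hN).symm

lemma Gamma_ratio_eq_four : Gamma 2 * Gamma (1 / 4) / (Gamma 1 * Gamma (5 / 4)) = 4 := by
  have := Gamma_pos_of_pos (by norm_num : (0 : ℝ) < 1 / 4)
  rw [Gamma_two, Gamma_one, show (5 / 4 : ℝ) = 1 / 4 + 1 by norm_num, Gamma_add_one (by norm_num)]
  field_simp

lemma Gamma_ratio_eq_sqrt_two_sub_one :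
    Gamma (3 / 8) * Gamma (5 / 8) / (Gamma (1 / 8) * Gamma (7 / 8)) = √2 - 1 := by
  have h38 := Gamma_mul_Gamma_one_sub (3 / 8)
  have h18 := Gamma_mul_Gamma_one_sub (1 / 8)
  rw [show (1 : ℝ) - 3 / 8 = 5 / 8 by norm_num, show π * (3 / 8) = π / 2 - π / 8 by ring,
    sin_pi_div_two_sub, cos_pi_div_eight] at h38
  rw [show (1 : ℝ) - 1 / 8 = 7 / 8 by norm_num, show π * (1 / 8) = π / 8 by ring,
    sin_pi_div_eight] at h18
  have hsq : √(2 - √2) = (√2 - 1) * √(2 + √2) := by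
    have h2 : √2 ^ 2 = 2 := sq_sqrt zero_le_two
    have h1 : 1 ≤ √2 := by nlinarith [sqrt_nonneg 2]
    rw [← sqrt_sq (by linarith : 0 ≤ √2 - 1), ← sqrt_mul (sq_nonneg _)]
    congr 1
    nlinarith
  have : 0 < √(2 + √2) := sqrt_pos.mpr (by positivity)
  rw [h38, h18, hsq]
  field_simp

lemma tmSignProd_quad (a b c d : ℝ) :
    tmSignProd (fun n => ((n + a) * (n + b)) / ((n + c) * (n + d)))
      = fun N => tmSignProd (shiftRatio a) N * tmSignProd (shiftRatio b) N
        / (tmSignProd (shiftRatio c) N * tmSignProd (shiftRatio d) N) := by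
  funext N
  rw [← tmSignProd_mul, ← tmSignProd_mul, ← tmSignProd_div]
  congr 1
  funext n
  simp only [shiftRatio]
  field_simp

lemma prod_pow_tm_eq_sqrt {g : ℕ → ℝ} (hg : ∀ n, 0 < g n) (N : ℕ) :
    ∏ n ∈ range N, g n ^ tm n = √((∏ n ∈ range N, g n) / tmSignProd g N) := by
  have hE : 0 < tmSignProd g N := prod_pos fun n _ => zpow_pos (hg n) _
  rw [← prod_congr rfl fun n _ => zpow_tmSign_mul_sq_pow_tm (hg n).ne' n, prod_mul_distrib,
    ← tmSignProd, prod_pow, mul_div_cancel_left₀ _ hE.ne',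
    sqrt_sq (prod_nonneg fun n _ => pow_nonneg (hg n).le _)]

theorem tendsto_prod_quad_pow_tm {a b c d : ℝ} (ha : 0 < a) (hb : 0 < b) (hc : 0 < c)
    (hd : 0 < d) (h : a + b = c + d) :
    Tendsto (fun N => ∏ n ∈ range N, (((n + a) * (n + b)) / ((n + c) * (n + d))) ^ tm n) atTop
      (𝓝 √(Gamma c * Gamma d / (Gamma a * Gamma b)
        / (tmRatioProd a * tmRatioProd b / (tmRatioProd c * tmRatioProd d)))) := by
  have hE : Tendsto (tmSignProd fun n => ((n + a) * (n + b)) / ((n + c) * (n + d))) atTop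
      (𝓝 (tmRatioProd a * tmRatioProd b / (tmRatioProd c * tmRatioProd d))) := by
    rw [tmSignProd_quad]
    exact ((tendsto_tmRatioProd ha).mul (tendsto_tmRatioProd hb)).div
      ((tendsto_tmRatioProd hc).mul (tendsto_tmRatioProd hd))
      (mul_pos (tmRatioProd_pos hc) (tmRatioProd_pos hd)).ne'
  have hE0 : tmRatioProd a * tmRatioProd b / (tmRatioProd c * tmRatioProd d) ≠ 0 := by
    have := tmRatioProd_pos ha; have := tmRatioProd_pos hb
    have := tmRatioProd_pos hc; have := tmRatioProd_pos hd
    positivity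
  have hg : ∀ n : ℕ, 0 < ((n + a) * (n + b)) / ((n + c) * (n + d)) := fun n => by positivity
  exact ((tendsto_prod_quad ha hb hc hd h).div hE hE0).sqrt.congr fun N =>
    (prod_pow_tm_eq_sqrt hg N).symm

theorem prod_tn_pair :
    Tendsto (fun N => ∏ n ∈ Finset.range N,
        ((((n : ℝ) + 1) * (4 * (n : ℝ) + 5)) /
          (((n : ℝ) + 2) * (4 * (n : ℝ) + 1))) ^ tm n)
      atTop (𝓝 (Real.sqrt 2)) ∧
    Tendsto (fun N => ∏ n ∈ Finset.range N,
        (((8 * (n : ℝ) + 1) * (8 * (n : ℝ) + 7)) /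
          ((8 * (n : ℝ) + 3) * (8 * (n : ℝ) + 5))) ^ tm n)
      atTop (𝓝 (Real.sqrt (2 * Real.sqrt 2 - 2))) := by
  constructor
  · convert tendsto_prod_quad_pow_tm (a := 1) (b := 5 / 4) (c := 2) (d := 1 / 4)
      (by norm_num) (by norm_num) (by norm_num) (by norm_num) (by norm_num) using 4 with N n
    · field_simp
    · rw [Gamma_ratio_eq_four, tmRatioProd_ratio_eq_two]
      norm_num
  · convert tendsto_prod_quad_pow_tm (a := 1 / 8) (b := 7 / 8) (c := 3 / 8) (d := 5 / 8)
      (by norm_num) (by norm_num) (by norm_num) (by norm_num) (by norm_num) using 4 with N n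
    · field_simp
    · rw [Gamma_ratio_eq_sqrt_two_sub_one, tmRatioProd_ratio_eq_half]
      ring
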